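/- arXiv:2401.11383 — 4 statements merged into one kernel-verified Lean document; each statement's English description precedes it below -/
import Mathlib

section
/- Let p*_t be the adjoint Ornstein-Uhlenbeck semigroup, defined by (p*_t f)(x) = ∫ f(y) g_{1−e^{−2t}}(x − e^{−t} y) dy where g_a is the centered Gaussian density of variance a. Then for any t ≥ 0 and probability densities f₁, f₂ and λ ∈ (0,1), (p*_t f₁) *_λ (p*_t f₂) = p*_t (f₁ *_λ f₂), where f₁ *_λ f₂ denotes the density of λX₁ + √(1−λ²)X₂ for independent X₁ ∼ f₁, X₂ ∼ f₂. -/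
/-!
`p*_t f` is the density of `e X + √a Z` with `e = e^{-t}`, `a = 1 - e^{-2t}`, `X ∼ f` and `Z` an
independent standard Gaussian. Hence both sides are the density of
`e (λ X₁ + s X₂) + √a (λ Z₁ + s Z₂)` with `s = √(1 - λ²)`, where `λ Z₁ + s Z₂` is again standard
Gaussian. On densities: by Fubini both sides equal `∫∫ f₁ u f₂ v g_a (x - e (λ u + s v)) du dv`;
on the left the remaining integral is that of a product of two Gaussians, computed by completing
the square, and `λ² + s² = 1` makes the variance come out as `a` again.
-/

open MeasureTheory ProbabilityTheory Real Filter Set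

/-- Centered Gaussian density with variance `a`. -/
noncomputable def gaussDensity (a : ℝ) (x : ℝ) : ℝ :=
  (Real.sqrt (2 * Real.pi * a))⁻¹ * Real.exp (-x ^ 2 / (2 * a))

/-- Fisher information of a density `f`. -/
noncomputable def fisherInfo (f : ℝ → ℝ) : ℝ :=
  ∫ x, (deriv f x) ^ 2 / f x

/-- Differential entropy of a density `f`. -/
noncomputable def diffEntropy (f : ℝ → ℝ) : ℝ :=
  -∫ x, f x * Real.log (f x)

/-- Kullback-Leibler divergence between densities. -/
noncomputable def klDiv' (f g : ℝ → ℝ) : ℝ :=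
  ∫ x, f x * Real.log (f x / g x)

/-- `f` is a probability density function on `ℝ`. -/
def IsPdf (f : ℝ → ℝ) : Prop :=
  Measurable f ∧ (∀ x, 0 ≤ f x) ∧ ∫ x, f x = 1

/-- Adjoint Ornstein-Uhlenbeck semigroup acting on densities. -/
noncomputable def OUStar (t : ℝ) (f : ℝ → ℝ) (x : ℝ) : ℝ :=
  ∫ y, f y * gaussDensity (1 - Real.exp (-2 * t)) (x - Real.exp (-t) * y)

/-- Density of `λ X₁ + √(1-λ²) X₂` for independent `X₁ ∼ f₁`, `X₂ ∼ f₂`. -/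
noncomputable def convL (l : ℝ) (f₁ f₂ : ℝ → ℝ) (x : ℝ) : ℝ :=
  (Real.sqrt (1 - l ^ 2))⁻¹ *
    ∫ y, f₁ y * f₂ ((x - l * y) / Real.sqrt (1 - l ^ 2))

/-- Tail variance (second moment outside a ball) of a density `f`. -/
noncomputable def tailVar (f : ℝ → ℝ) (R : ℝ) : ℝ :=
  ∫ x in {x : ℝ | R ≤ |x|}, x ^ 2 * f x

/-- Entropy jump of two densities. -/
noncomputable def entJump (l : ℝ) (f₁ f₂ : ℝ → ℝ) : ℝ :=
  diffEntropy (convL l f₁ f₂) - (l ^ 2 * diffEntropy f₁ + (1 - l ^ 2) * diffEntropy f₂)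

lemma gaussDensity_nonneg (a x : ℝ) : 0 ≤ gaussDensity a x := by
  unfold gaussDensity; positivity

@[fun_prop]
lemma continuous_gaussDensity (a : ℝ) : Continuous (gaussDensity a) := by
  unfold gaussDensity; fun_prop

lemma gaussDensity_of_nonpos {a : ℝ} (ha : a ≤ 0) : gaussDensity a = 0 := by
  have : √(2 * π * a) = 0 := Real.sqrt_eq_zero'.2 (by nlinarith [pi_pos])
  ext x; simp [gaussDensity, this]

lemma gaussDensity_eq_gaussianPDFReal {a : ℝ} (ha : 0 ≤ a) :
    gaussDensity a = gaussianPDFReal 0 a.toNNReal := by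
  ext x; simp [gaussDensity, gaussianPDFReal, Real.coe_toNNReal a ha]

lemma norm_gaussDensity_le {a : ℝ} (ha : 0 ≤ a) (x : ℝ) :
    ‖gaussDensity a x‖ ≤ (√(2 * π * a))⁻¹ := by
  rw [Real.norm_of_nonneg (gaussDensity_nonneg a x)]
  refine mul_le_of_le_one_right (by positivity) (Real.exp_le_one_iff.2 ?_)
  exact div_nonpos_of_nonpos_of_nonneg (neg_nonpos.2 (sq_nonneg x)) (by positivity)

lemma integrable_gaussDensity (a : ℝ) : Integrable (gaussDensity a) := by
  rcases le_total 0 a with ha | ha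
  · rw [gaussDensity_eq_gaussianPDFReal ha]; exact integrable_gaussianPDFReal 0 _
  · rw [gaussDensity_of_nonpos ha]; exact integrable_zero _ _ _

lemma integral_gaussDensity {a : ℝ} (ha : 0 < a) : ∫ x, gaussDensity a x = 1 := by
  rw [gaussDensity_eq_gaussianPDFReal ha.le]
  exact integral_gaussianPDFReal_eq_one 0 (by simpa using ha)

lemma gaussDensity_mul_gaussDensity_div {a s l : ℝ} (ha : 0 < a) (hs : 0 < s)
    (hsl : s ^ 2 + l ^ 2 = 1) (c z y : ℝ) :
    gaussDensity a (y - c) * gaussDensity a ((z - l * y) / s)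
      = s * gaussDensity a (z - l * c) * gaussDensity (a * s ^ 2) (y - (s ^ 2 * c + l * z)) := by
  have hsqrt : √(2 * π * (a * s ^ 2)) = √(2 * π * a) * s := by
    rw [← mul_assoc, Real.sqrt_mul (by positivity), Real.sqrt_sq hs.le]
  have hexp : -(y - c) ^ 2 / (2 * a) + -((z - l * y) / s) ^ 2 / (2 * a)
      = -(z - l * c) ^ 2 / (2 * a) + -(y - (s ^ 2 * c + l * z)) ^ 2 / (2 * (a * s ^ 2)) := by
    field_simp
    linear_combination (s ^ 2 * c ^ 2 + z ^ 2 - y ^ 2) * hsl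
  simp only [gaussDensity, hsqrt]
  rw [show ∀ p q r : ℝ, p * Real.exp q * (p * Real.exp r) = p ^ 2 * Real.exp (q + r) by
    intros; rw [Real.exp_add]; ring, hexp, Real.exp_add]
  field_simp

lemma integral_gaussDensity_mul_gaussDensity_div {a s l : ℝ} (ha : 0 < a) (hs : 0 < s)
    (hsl : s ^ 2 + l ^ 2 = 1) (c z : ℝ) :
    ∫ y, gaussDensity a (y - c) * gaussDensity a ((z - l * y) / s)
      = s * gaussDensity a (z - l * c) := by
  simp_rw [gaussDensity_mul_gaussDensity_div ha hs hsl c z]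
  rw [integral_const_mul, integral_sub_right_eq_self (gaussDensity (a * s ^ 2)),
    integral_gaussDensity (by positivity), mul_one]

section Fubini

variable {α β : Type*} [MeasurableSpace α] [MeasurableSpace β] {μ : Measure α} {ν : Measure β}

lemma integral_norm_mul_le_of_norm_le {h φ : β → ℝ} (hh : Integrable h ν) {C : ℝ}
    (hφ : ∀ y, ‖φ y‖ ≤ C) : ∫ y, ‖h y * φ y‖ ∂ν ≤ C * ∫ y, ‖h y‖ ∂ν := by
  rw [← integral_const_mul]
  refine integral_mono_of_nonneg (ae_of_all _ fun _ => norm_nonneg _) (hh.norm.const_mul C)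
    (ae_of_all _ fun y => ?_)
  simp only [norm_mul, mul_comm C]
  exact mul_le_mul_of_nonneg_left (hφ y) (norm_nonneg _)

variable [SFinite ν]

lemma integrable_prod_mul_of_integral_norm_le {f : α → ℝ} (hf : Integrable f μ)
    {κ : α → β → ℝ} (hκ : AEStronglyMeasurable (Function.uncurry κ) (μ.prod ν))
    (hκi : ∀ x, Integrable (κ x) ν) {C : ℝ} (hC : ∀ x, ∫ y, ‖κ x y‖ ∂ν ≤ C) :
    Integrable (fun p : α × β => f p.1 * κ p.1 p.2) (μ.prod ν) := by
  refine (integrable_prod_iff (hf.aestronglyMeasurable.comp_fst.mul hκ)).2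
    ⟨ae_of_all _ fun x => (hκi x).const_mul (f x), ?_⟩
  refine (hf.norm.mul_const C).mono' ?_ (ae_of_all _ fun x => ?_)
  · exact (hf.aestronglyMeasurable.comp_fst.mul hκ).norm.integral_prod_right'
  · change ‖∫ y, ‖f x * κ x y‖ ∂ν‖ ≤ ‖f x‖ * C
    simp only [norm_mul, integral_const_mul, norm_norm]
    rw [Real.norm_of_nonneg (integral_nonneg fun _ => norm_nonneg _)]
    exact mul_le_mul_of_nonneg_left (hC x) (norm_nonneg _)

lemma integral_mul_integral_swap [SFinite μ] {f : α → ℝ} (hf : Integrable f μ)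
    {κ : α → β → ℝ} (hκ : AEStronglyMeasurable (Function.uncurry κ) (μ.prod ν))
    (hκi : ∀ x, Integrable (κ x) ν) {C : ℝ} (hC : ∀ x, ∫ y, ‖κ x y‖ ∂ν ≤ C) :
    ∫ x, f x * ∫ y, κ x y ∂ν ∂μ = ∫ y, ∫ x, f x * κ x y ∂μ ∂ν := by
  simp_rw [← integral_const_mul]
  exact integral_integral_swap (integrable_prod_mul_of_integral_norm_le hf hκ hκi hC)

lemma integral_integral_mul_bdd_swap [SFinite μ] {f : α → ℝ} (hf : Integrable f μ)
    {k : α → β → ℝ} (hk : AEStronglyMeasurable (Function.uncurry k) (μ.prod ν))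
    (hki : ∀ x, Integrable (k x) ν) {K : ℝ} (hK : ∀ x, ∫ y, ‖k x y‖ ∂ν ≤ K)
    {φ : β → ℝ} (hφm : AEStronglyMeasurable φ ν) {C : ℝ} (hφ : ∀ y, ‖φ y‖ ≤ C) :
    ∫ y, (∫ x, f x * k x y ∂μ) * φ y ∂ν = ∫ x, f x * ∫ y, k x y * φ y ∂ν ∂μ := by
  rw [integral_mul_integral_swap hf (κ := fun x y => k x y * φ y) (C := |C| * K)
    (hk.mul hφm.comp_snd) (fun x => (hki x).mul_bdd hφm (ae_of_all _ hφ))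
    (fun x => (integral_norm_mul_le_of_norm_le (hki x) fun y => (hφ y).trans (le_abs_self C))
      |>.trans (mul_le_mul_of_nonneg_left (hK x) (abs_nonneg C)))]
  simp only [← integral_mul_const, mul_assoc]

end Fubini

/-- The density of `e X + √a Z` for `X ∼ f` and an independent standard Gaussian `Z`;
`OUStar t` is the case `a = 1 - exp (-2t)`, `e = exp (-t)`. -/
noncomputable def gaussSmooth (a e : ℝ) (f : ℝ → ℝ) (x : ℝ) : ℝ :=
  ∫ y, f y * gaussDensity a (x - e * y)

section gaussSmooth

variable {a : ℝ} (e : ℝ) {f : ℝ → ℝ}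

lemma gaussSmooth_of_nonpos (ha : a ≤ 0) (f : ℝ → ℝ) : gaussSmooth a e f = 0 := by
  ext x; simp [gaussSmooth, gaussDensity_of_nonpos ha]

lemma integrable_mul_gaussDensity (hf : Integrable f) (ha : 0 ≤ a) (x : ℝ) :
    Integrable (fun y => f y * gaussDensity a (x - e * y)) :=
  hf.mul_bdd (Continuous.aestronglyMeasurable (by fun_prop))
    (ae_of_all _ fun _ => norm_gaussDensity_le ha _)

lemma integral_norm_mul_gaussDensity_le (hf : Integrable f) (ha : 0 ≤ a) (x : ℝ) :
    ∫ y, ‖f y * gaussDensity a (x - e * y)‖ ≤ (√(2 * π * a))⁻¹ * ∫ y, ‖f y‖ :=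
  integral_norm_mul_le_of_norm_le hf fun _ => norm_gaussDensity_le ha _

lemma norm_gaussSmooth_le (hf : Integrable f) (ha : 0 ≤ a) (x : ℝ) :
    ‖gaussSmooth a e f x‖ ≤ (√(2 * π * a))⁻¹ * ∫ y, ‖f y‖ :=
  (norm_integral_le_integral_norm _).trans (integral_norm_mul_gaussDensity_le e hf ha x)

lemma continuous_gaussSmooth (hf : Integrable f) (ha : 0 ≤ a) : Continuous (gaussSmooth a e f) :=
  continuous_of_dominated (fun x => (integrable_mul_gaussDensity e hf ha x).aestronglyMeasurable)
    (fun x => ae_of_all _ fun y => by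
      rw [norm_mul]; exact mul_le_mul_of_nonneg_left (norm_gaussDensity_le ha _) (norm_nonneg _))
    (hf.norm.mul_const _) (ae_of_all _ fun y => by fun_prop)

lemma integral_gaussSmooth_mul (hf : Integrable f) (ha : 0 < a) {φ : ℝ → ℝ}
    (hφm : AEStronglyMeasurable φ) {C : ℝ} (hφ : ∀ y, ‖φ y‖ ≤ C) :
    ∫ y, gaussSmooth a e f y * φ y = ∫ u, f u * ∫ y, gaussDensity a (y - e * u) * φ y :=
  integral_integral_mul_bdd_swap hf (Continuous.aestronglyMeasurable (by fun_prop))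
    (fun u => (integrable_gaussDensity a).comp_sub_right (e * u))
    (fun u => by
      simp_rw [Real.norm_of_nonneg (gaussDensity_nonneg _ _)]
      rw [integral_sub_right_eq_self (gaussDensity a), integral_gaussDensity ha])
    hφm hφ

lemma integral_gaussDensity_mul_gaussSmooth (hf : Integrable f) (ha : 0 < a) {s l : ℝ}
    (hs : 0 < s) (hsl : s ^ 2 + l ^ 2 = 1) (c x : ℝ) :
    ∫ y, gaussDensity a (y - c) * gaussSmooth a e f ((x - l * y) / s)
      = s * ∫ v, f v * gaussDensity a (x - l * c - s * e * v) := by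
  calc ∫ y, gaussDensity a (y - c) * gaussSmooth a e f ((x - l * y) / s)
      = ∫ v, ∫ y, gaussDensity a (y - c) * (f v * gaussDensity a ((x - l * y) / s - e * v)) :=
        integral_mul_integral_swap
          ((integrable_gaussDensity a).comp_sub_right c)
          (hf.aestronglyMeasurable.comp_snd.mul (Continuous.aestronglyMeasurable (by fun_prop)))
          (fun y => integrable_mul_gaussDensity e hf ha.le _)
          (fun y => integral_norm_mul_gaussDensity_le e hf ha.le _)
    _ = ∫ v, f v * (s * gaussDensity a (x - l * c - s * e * v)) := by
        congr 1; ext v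
        have hrw (y : ℝ) : (x - l * y) / s - e * v = (x - s * e * v - l * y) / s := by
          field_simp; ring
        simp_rw [mul_left_comm _ (f v), hrw]
        rw [integral_const_mul, integral_gaussDensity_mul_gaussDensity_div ha hs hsl,
          sub_right_comm]
    _ = s * ∫ v, f v * gaussDensity a (x - l * c - s * e * v) := by
        simp_rw [mul_left_comm (f _) s]; exact integral_const_mul _ _

end gaussSmooth

lemma integral_comp_sub_div (H : ℝ → ℝ) (b s : ℝ) : ∫ y, H ((y - b) / s) = |s| * ∫ v, H v :=
  (integral_sub_right_eq_self (fun y => H (y / s)) b).trans (Measure.integral_comp_div H s)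

lemma convL_of_nonpos {l : ℝ} (hl : 1 - l ^ 2 ≤ 0) (f₁ f₂ : ℝ → ℝ) : convL l f₁ f₂ = 0 := by
  ext x; simp [convL, Real.sqrt_eq_zero'.2 hl]

lemma integral_convL_mul {l : ℝ} (hl : 0 < 1 - l ^ 2) {f₁ f₂ : ℝ → ℝ} (hf₁ : Integrable f₁)
    (hf₂ : Integrable f₂) (hf₂m : Measurable f₂) {φ : ℝ → ℝ} (hφm : AEStronglyMeasurable φ)
    {C : ℝ} (hφ : ∀ y, ‖φ y‖ ≤ C) :
    ∫ y, convL l f₁ f₂ y * φ y = ∫ u, f₁ u * ∫ v, f₂ v * φ (l * u + √(1 - l ^ 2) * v) := by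
  set s := √(1 - l ^ 2)
  have hs : 0 < s := Real.sqrt_pos.2 hl
  have hsubst (u : ℝ) : ∫ y, f₂ ((y - l * u) / s) * φ y = s * ∫ v, f₂ v * φ (l * u + s * v) := by
    have := integral_comp_sub_div (fun v => f₂ v * φ (l * u + s * v)) (l * u) s
    rw [abs_of_pos hs] at this
    simpa only [mul_div_cancel₀ _ hs.ne', add_sub_cancel] using this
  calc ∫ y, convL l f₁ f₂ y * φ y
      = s⁻¹ * ∫ y, (∫ u, f₁ u * f₂ ((y - l * u) / s)) * φ y := by
        simp only [convL, mul_assoc]; exact integral_const_mul _ _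
    _ = s⁻¹ * ∫ u, f₁ u * ∫ y, f₂ ((y - l * u) / s) * φ y := by
        rw [integral_integral_mul_bdd_swap hf₁ (k := fun u y => f₂ ((y - l * u) / s))
          (hf₂m.comp (by fun_prop)).aestronglyMeasurable
          (fun u => (hf₂.comp_div hs.ne').comp_sub_right (l * u))
          (fun u => (integral_comp_sub_div (‖f₂ ·‖) (l * u) s).le) hφm hφ]
    _ = ∫ u, f₁ u * ∫ v, f₂ v * φ (l * u + s * v) := by
        simp_rw [hsubst, mul_left_comm (f₁ _) s, integral_const_mul, inv_mul_cancel_left₀ hs.ne']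

theorem convL_gaussSmooth {a : ℝ} (ha : 0 < a) (e : ℝ) {l : ℝ} (hl : 0 < 1 - l ^ 2)
    {f₁ f₂ : ℝ → ℝ} (hf₁ : Integrable f₁) (hf₂ : Integrable f₂) (hf₂m : Measurable f₂) :
    convL l (gaussSmooth a e f₁) (gaussSmooth a e f₂) = gaussSmooth a e (convL l f₁ f₂) := by
  ext x
  set s := √(1 - l ^ 2)
  have hs : 0 < s := Real.sqrt_pos.2 hl
  have hsl : s ^ 2 + l ^ 2 = 1 := by rw [Real.sq_sqrt hl.le]; ring
  calc convL l (gaussSmooth a e f₁) (gaussSmooth a e f₂) x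
      = s⁻¹ * ∫ u, f₁ u *
          ∫ y, gaussDensity a (y - e * u) * gaussSmooth a e f₂ ((x - l * y) / s) :=
        congrArg _ <| integral_gaussSmooth_mul e hf₁ ha
          ((continuous_gaussSmooth e hf₂ ha.le).comp (by fun_prop)).aestronglyMeasurable
          fun _ => norm_gaussSmooth_le e hf₂ ha.le _
    _ = ∫ u, f₁ u * ∫ v, f₂ v * gaussDensity a (x - e * (l * u + s * v)) := by
        simp_rw [integral_gaussDensity_mul_gaussSmooth e hf₂ ha hs hsl, mul_left_comm (f₁ _) s,
          integral_const_mul, inv_mul_cancel_left₀ hs.ne']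
        ring_nf
    _ = gaussSmooth a e (convL l f₁ f₂) x := by
        rw [gaussSmooth, integral_convL_mul hl hf₁ hf₂ hf₂m
          (Continuous.aestronglyMeasurable (by fun_prop)) fun _ => norm_gaussDensity_le ha.le _]

lemma IsPdf.integrable {f : ℝ → ℝ} (hf : IsPdf f) : Integrable f := by
  by_contra h
  simpa [integral_undef h] using hf.2.2

theorem stmt3_general (t : ℝ) (lam : ℝ) (f₁ f₂ : ℝ → ℝ) (h₁ : IsPdf f₁) (h₂ : IsPdf f₂) :
    convL lam (OUStar t f₁) (OUStar t f₂) = OUStar t (convL lam f₁ f₂) := by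
  change convL lam (gaussSmooth _ _ f₁) (gaussSmooth _ _ f₂) = gaussSmooth _ _ (convL lam f₁ f₂)
  -- For `t ≤ 0` or `lam ^ 2 ≥ 1` a `√` of a nonpositive number is `0`, and both sides vanish.
  rcases le_or_gt (1 - exp (-2 * t)) 0 with ha | ha
  · simp only [gaussSmooth_of_nonpos _ ha]
    ext x; simp [convL]
  rcases le_or_gt (1 - lam ^ 2) 0 with hl | hl
  · ext x; simp [convL_of_nonpos hl, gaussSmooth]
  exact convL_gaussSmooth ha _ hl h₁.integrable h₂.integrable h₂.1

/-- the adjoint Ornstein-Uhlenbeck semigroup commutes with the scaled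
convolution: `(p*_t f₁) *_λ (p*_t f₂) = p*_t (f₁ *_λ f₂)`. -/
theorem stmt3 (t : ℝ) (ht : 0 ≤ t) (lam : ℝ) (hlam : lam ∈ Set.Ioo (0 : ℝ) 1)
    (f₁ f₂ : ℝ → ℝ) (h₁ : IsPdf f₁) (h₂ : IsPdf f₂) :
    convL lam (OUStar t f₁) (OUStar t f₂) = OUStar t (convL lam f₁ f₂) :=
  stmt3_general t lam f₁ f₂ h₁ h₂
end

section
/- Under the same setting (Y = Σ λᵢXᵢ for i.i.d. mean-zero Xᵢ with finite fourth moment and Σλᵢ²=1), the tail variance satisfies L_Y(R) ≤ min{ √((E[X⁴] + 3(E[X²])²)·E[X²]) / R , E[X²] } for all R ≥ 0. -/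
/-!
Write `Y = ∑ λᵢ Xᵢ`. By Cauchy–Schwarz and Chebyshev,
`E[Y² 1_{|Y| ≥ R}] ≤ √(E[Y⁴]) √(P(|Y| ≥ R)) ≤ √(E[Y⁴] E[Y²]) / R`.
Independence and `E[Xᵢ] = 0` kill every cross term containing an odd power, so
`E[Y²] = ∑ λᵢ² E[X²] = E[X²]` and
`E[Y⁴] = ∑ λᵢ⁴ E[X⁴] + 6 ∑_{i<j} λᵢ²λⱼ² E[X²]² ≤ E[X⁴] + 3 E[X²]²`,
using `λᵢ⁴ ≤ λᵢ²`. The bound by `E[X²]` is just `E[Y² 1_A] ≤ E[Y²]`.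
-/

open MeasureTheory ProbabilityTheory Real Filter Set

namespace MeasureTheory

variable {Ω : Type*} [MeasurableSpace Ω] {μ : Measure Ω}

lemma MemLp.integrable_pow_of_le [IsFiniteMeasure μ] {f : Ω → ℝ} {p k : ℕ} (hf : MemLp f p μ)
    (hk : k ≤ p) : Integrable (fun ω ↦ f ω ^ k) μ := by
  refine (integrable_norm_iff (f := fun ω ↦ f ω ^ k) (hf.aestronglyMeasurable.pow k)).1 ?_
  simpa only [norm_pow] using (hf.mono_exponent (by exact_mod_cast hk)).integrable_norm_pow'

lemma memLp_of_integrable_pow {f : Ω → ℝ} {p : ℕ} (hp : p ≠ 0) (hf : AEStronglyMeasurable f μ)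
    (h : Integrable (fun ω ↦ f ω ^ p) μ) : MemLp f p μ := by
  refine (integrable_norm_rpow_iff hf (by exact_mod_cast hp) (by simp)).1 ?_
  simpa [Real.rpow_natCast, norm_pow] using h.norm

section

variable [IsFiniteMeasure μ] {Y : Ω → ℝ}

lemma setIntegral_sq_le_sqrt_mul_sqrt (hY : MemLp Y 4 μ) (A : Set Ω) :
    ∫ ω in A, Y ω ^ 2 ∂μ ≤ √(∫ ω, Y ω ^ 4 ∂μ) * √(μ.real A) := by
  have hY4 : Integrable (fun ω ↦ Y ω ^ 4) μ := hY.integrable_pow_of_le (p := 4) le_rfl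
  have hY2 : MemLp (fun ω ↦ Y ω ^ 2) (ENNReal.ofReal 2) (μ.restrict A) := by
    rw [ENNReal.ofReal_ofNat, memLp_two_iff_integrable_sq (f := fun ω ↦ Y ω ^ 2)
      (hY.aestronglyMeasurable.pow 2).restrict]
    simpa only [← pow_mul] using hY4.restrict
  have hcauchySchwarz := integral_mul_le_Lp_mul_Lq_of_nonneg Real.HolderConjugate.two_two
    (ae_of_all _ fun ω ↦ sq_nonneg (Y ω)) (ae_of_all _ fun _ ↦ zero_le_one)
    hY2 (memLp_const (1 : ℝ))
  simp only [mul_one, integral_const, smul_eq_mul, ← sqrt_eq_rpow, measureReal_restrict_apply_univ,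
    rpow_ofNat, one_pow, ← pow_mul, Nat.reduceMul] at hcauchySchwarz
  refine hcauchySchwarz.trans (mul_le_mul_of_nonneg_right (sqrt_le_sqrt ?_) (sqrt_nonneg _))
  exact setIntegral_le_integral hY4 (ae_of_all _ fun ω ↦ by positivity)

lemma setIntegral_abs_ge_sq_le (hY : MemLp Y 4 μ) {R : ℝ} (hR : 0 < R) :
    ∫ ω in {ω | R ≤ |Y ω|}, Y ω ^ 2 ∂μ ≤ √((∫ ω, Y ω ^ 4 ∂μ) * ∫ ω, Y ω ^ 2 ∂μ) / R := by
  have hchebyshev : μ.real {ω | R ≤ |Y ω|} ≤ (∫ ω, Y ω ^ 2 ∂μ) / R ^ 2 := by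
    have hmarkov := mul_meas_ge_le_integral_of_nonneg (ae_of_all _ fun ω ↦ sq_nonneg (Y ω))
      (hY.integrable_pow_of_le (p := 4) (by norm_num)) (R ^ 2)
    have hset : {ω | R ^ 2 ≤ Y ω ^ 2} = {ω | R ≤ |Y ω|} := by
      ext ω
      simp only [mem_ofPred_eq, ← sq_abs (Y ω), sq_le_sq₀ hR.le (abs_nonneg _)]
    rw [hset] at hmarkov
    rw [le_div_iff₀ (by positivity)]
    linarith
  have hY4 : 0 ≤ ∫ ω, Y ω ^ 4 ∂μ := integral_nonneg fun ω ↦ by positivity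
  calc ∫ ω in {ω | R ≤ |Y ω|}, Y ω ^ 2 ∂μ
      ≤ √(∫ ω, Y ω ^ 4 ∂μ) * √(μ.real {ω | R ≤ |Y ω|}) := setIntegral_sq_le_sqrt_mul_sqrt hY _
    _ ≤ √(∫ ω, Y ω ^ 4 ∂μ) * √((∫ ω, Y ω ^ 2 ∂μ) / R ^ 2) := by gcongr
    _ = √((∫ ω, Y ω ^ 4 ∂μ) * ∫ ω, Y ω ^ 2 ∂μ) / R := by
      rw [sqrt_div' _ (by positivity), sqrt_sq hR.le, sqrt_mul hY4, mul_div_assoc]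

end

end MeasureTheory

lemma Finset.sum_pow_four_le_one_of_sum_sq_eq_one {ι : Type*} {s : Finset ι} {a : ι → ℝ}
    (h : ∑ i ∈ s, a i ^ 2 = 1) : ∑ i ∈ s, a i ^ 4 ≤ 1 :=
  h ▸ Finset.sum_le_sum fun i hi ↦ by
    have : a i ^ 2 ≤ 1 := h ▸ Finset.single_le_sum (fun j _ ↦ sq_nonneg (a j)) hi
    nlinarith [sq_nonneg (a i)]

namespace ProbabilityTheory

variable {Ω ι : Type*} [MeasurableSpace Ω] {μ : Measure Ω} {Z : ι → Ω → ℝ}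

lemma iIndepFun.indepFun_fun_finsetSum_of_notMem (hZ : iIndepFun Z μ)
    (hZm : ∀ i, AEMeasurable (Z i) μ) {s : Finset ι} {j : ι} (hj : j ∉ s) :
    IndepFun (Z j) (fun ω ↦ ∑ i ∈ s, Z i ω) μ := by
  simpa only [Finset.sum_fn] using (hZ.indepFun_finsetSum_of_notMem₀ hZm hj).symm

variable [IsProbabilityMeasure μ]

lemma IndepFun.integral_add_pow {W S : Ω → ℝ} {n : ℕ} (h : IndepFun W S μ) (hW : MemLp W n μ)
    (hS : MemLp S n μ) :
    ∫ ω, (W ω + S ω) ^ n ∂μ =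
      ∑ k ∈ Finset.range (n + 1), (∫ ω, W ω ^ k ∂μ) * (∫ ω, S ω ^ (n - k) ∂μ) * n.choose k := by
  have hpow : ∀ k, IndepFun (fun ω ↦ W ω ^ k) (fun ω ↦ S ω ^ (n - k)) μ := fun k ↦
    h.comp (measurable_id.pow_const k) (measurable_id.pow_const (n - k))
  simp_rw [add_pow]
  rw [integral_finsetSum _ fun k hk ↦ ?_]
  · refine Finset.sum_congr rfl fun k _ ↦ ?_
    rw [integral_mul_const, (hpow k).integral_fun_mul_eq_mul_integral
      (hW.aestronglyMeasurable.pow k) (hS.aestronglyMeasurable.pow _)]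
  · exact ((hpow k).integrable_mul (hW.integrable_pow_of_le (Finset.mem_range_succ_iff.1 hk))
      (hS.integrable_pow_of_le (Nat.sub_le n k))).mul_const _

lemma IndepFun.integral_add_sq_of_integral_eq_zero {W S : Ω → ℝ} (h : IndepFun W S μ)
    (hW : MemLp W 2 μ) (hS : MemLp S 2 μ) (hW0 : ∫ ω, W ω ∂μ = 0) :
    ∫ ω, (W ω + S ω) ^ 2 ∂μ = ∫ ω, W ω ^ 2 ∂μ + ∫ ω, S ω ^ 2 ∂μ := by
  rw [h.integral_add_pow (n := 2) (by exact_mod_cast hW) (by exact_mod_cast hS)]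
  simp [Finset.sum_range_succ, hW0, add_comm]

lemma IndepFun.integral_add_pow_four_of_integral_eq_zero {W S : Ω → ℝ} (h : IndepFun W S μ)
    (hW : MemLp W 4 μ) (hS : MemLp S 4 μ) (hW0 : ∫ ω, W ω ∂μ = 0) (hS0 : ∫ ω, S ω ∂μ = 0) :
    ∫ ω, (W ω + S ω) ^ 4 ∂μ =
      ∫ ω, W ω ^ 4 ∂μ + 6 * (∫ ω, W ω ^ 2 ∂μ) * (∫ ω, S ω ^ 2 ∂μ) + ∫ ω, S ω ^ 4 ∂μ := by
  rw [h.integral_add_pow (n := 4) (by exact_mod_cast hW) (by exact_mod_cast hS)]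
  simp only [Nat.reduceAdd, Finset.sum_range_succ, Finset.range_one, Finset.sum_singleton,
    pow_zero, integral_const, probReal_univ, smul_eq_mul, mul_one, tsub_zero, one_mul, Nat.choose,
    Nat.cast_one, pow_one, hW0, Nat.add_one_sub_one, zero_mul, add_zero, Nat.cast_ofNat,
    Nat.reduceSub, hS0, mul_zero, tsub_self]
  ring

lemma iIndepFun.integral_finsetSum_sq (hZ : iIndepFun Z μ) (hL2 : ∀ i, MemLp (Z i) 2 μ)
    (h0 : ∀ i, ∫ ω, Z i ω ∂μ = 0) (s : Finset ι) :
    ∫ ω, (∑ i ∈ s, Z i ω) ^ 2 ∂μ = ∑ i ∈ s, ∫ ω, Z i ω ^ 2 ∂μ := by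
  classical
  induction s using Finset.induction_on with
  | empty => simp
  | insert j s hj ih =>
    simp only [Finset.sum_insert hj]
    rw [(hZ.indepFun_fun_finsetSum_of_notMem (fun i ↦ (hL2 i).aemeasurable)
      hj).integral_add_sq_of_integral_eq_zero (hL2 j) (memLp_finsetSum s fun i _ ↦ hL2 i) (h0 j),
      ih]

lemma iIndepFun.integral_finsetSum_pow_four_le (hZ : iIndepFun Z μ) (hL4 : ∀ i, MemLp (Z i) 4 μ)
    (h0 : ∀ i, ∫ ω, Z i ω ∂μ = 0) (s : Finset ι) :
    ∫ ω, (∑ i ∈ s, Z i ω) ^ 4 ∂μ ≤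
      ∑ i ∈ s, ∫ ω, Z i ω ^ 4 ∂μ + 3 * (∑ i ∈ s, ∫ ω, Z i ω ^ 2 ∂μ) ^ 2 := by
  classical
  have hL2 : ∀ i, MemLp (Z i) 2 μ := fun i ↦ (hL4 i).mono_exponent (by norm_num)
  induction s using Finset.induction_on with
  | empty => simp
  | insert j s hj ih =>
    have hS0 : ∫ ω, ∑ i ∈ s, Z i ω ∂μ = 0 := by
      rw [integral_finsetSum s fun i _ ↦ (hL4 i).integrable (by norm_num)]
      exact Finset.sum_eq_zero fun i _ ↦ h0 i
    have hW2 : 0 ≤ ∫ ω, Z j ω ^ 2 ∂μ := integral_nonneg fun ω ↦ sq_nonneg _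
    simp only [Finset.sum_insert hj]
    rw [(hZ.indepFun_fun_finsetSum_of_notMem (fun i ↦ (hL4 i).aemeasurable)
      hj).integral_add_pow_four_of_integral_eq_zero (hL4 j) (memLp_finsetSum s fun i _ ↦ hL4 i)
      (h0 j) hS0, hZ.integral_finsetSum_sq hL2 h0]
    nlinarith

end ProbabilityTheory

theorem stmt16_general {Ω : Type*} [MeasureSpace Ω] [IsProbabilityMeasure (ℙ : Measure Ω)]
    (n : ℕ) (X : Fin n → Ω → ℝ) (X0 : Ω → ℝ)
    (hXm : ∀ i, Measurable (X i)) (hX0m : Measurable X0)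
    (hindep : iIndepFun X ℙ)
    (hid : ∀ i, Measure.map (X i) ℙ = Measure.map X0 ℙ)
    (hmean : ∫ ω, X0 ω = 0)
    (h4 : Integrable (fun ω => (X0 ω) ^ 4))
    (lam : Fin n → ℝ)
    (hsum : ∑ i, (lam i) ^ 2 = 1) :
    (∀ R : ℝ, 0 ≤ R →
      (∫ ω in {ω | R ≤ |∑ i, lam i * X i ω|}, (∑ i, lam i * X i ω) ^ 2) ≤
        ∫ ω, (X0 ω) ^ 2) ∧
    (∀ R : ℝ, 0 < R →
      (∫ ω in {ω | R ≤ |∑ i, lam i * X i ω|}, (∑ i, lam i * X i ω) ^ 2) ≤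
        min (Real.sqrt (((∫ ω, (X0 ω) ^ 4) + 3 * (∫ ω, (X0 ω) ^ 2) ^ 2) *
              (∫ ω, (X0 ω) ^ 2)) / R)
            (∫ ω, (X0 ω) ^ 2)) := by
  have hX : ∀ i, IdentDistrib (X i) X0 ℙ ℙ := fun i ↦
    ⟨(hXm i).aemeasurable, hX0m.aemeasurable, hid i⟩
  have hX0 : MemLp X0 4 ℙ :=
    memLp_of_integrable_pow (p := 4) four_ne_zero hX0m.aestronglyMeasurable h4
  have hZ : ∀ i, MemLp (fun ω ↦ lam i * X i ω) 4 ℙ := fun i ↦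
    ((hX i).memLp_iff.2 hX0).const_mul (lam i)
  have hZindep : iIndepFun (fun i ω ↦ lam i * X i ω) ℙ :=
    hindep.comp _ fun i ↦ measurable_const_mul (lam i)
  have hZmoment : ∀ i k, ∫ ω, (lam i * X i ω) ^ k = lam i ^ k * ∫ ω, X0 ω ^ k := fun i k ↦ by
    simp_rw [mul_pow]
    rw [integral_const_mul]
    exact congrArg _ ((hX i).comp (measurable_id.pow_const k)).integral_eq
  have hZ0 : ∀ i, ∫ ω, lam i * X i ω = 0 := fun i ↦ by simpa [hmean] using hZmoment i 1
  have hY : MemLp (fun ω ↦ ∑ i, lam i * X i ω) 4 ℙ := memLp_finsetSum _ fun i _ ↦ hZ i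
  have hY2 : ∫ ω, (∑ i, lam i * X i ω) ^ 2 = ∫ ω, X0 ω ^ 2 := by
    rw [hZindep.integral_finsetSum_sq (fun i ↦ (hZ i).mono_exponent (by norm_num)) hZ0]
    simp only [hZmoment, ← Finset.sum_mul, hsum, one_mul]
  have hY4 : ∫ ω, (∑ i, lam i * X i ω) ^ 4 ≤ (∫ ω, X0 ω ^ 4) + 3 * (∫ ω, X0 ω ^ 2) ^ 2 := by
    refine (hZindep.integral_finsetSum_pow_four_le hZ hZ0 _).trans ?_
    simp only [hZmoment, ← Finset.sum_mul, hsum, one_mul]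
    have hm4 : 0 ≤ ∫ ω, X0 ω ^ 4 := integral_nonneg fun ω ↦ by positivity
    linarith [mul_le_of_le_one_left hm4 (Finset.sum_pow_four_le_one_of_sum_sq_eq_one hsum)]
  have htail : ∀ R, ∫ ω in {ω | R ≤ |∑ i, lam i * X i ω|}, (∑ i, lam i * X i ω) ^ 2 ≤
      ∫ ω, X0 ω ^ 2 := fun R ↦
    hY2 ▸ setIntegral_le_integral (hY.integrable_pow_of_le (p := 4) (by norm_num))
      (ae_of_all _ fun ω ↦ sq_nonneg _)
  refine ⟨fun R _ ↦ htail R, fun R hR ↦ le_min ?_ (htail R)⟩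
  refine (setIntegral_abs_ge_sq_le hY hR).trans ?_
  rw [hY2]
  gcongr

/-- in the setting of i.i.d. mean-zero `Xᵢ` with finite fourth moment and
`∑ λᵢ² = 1`, `Y = ∑ λᵢ Xᵢ` has tail variance
`L_Y(R) ≤ min (√((E[X⁴] + 3 (E[X²])²) E[X²]) / R) (E[X²])` for every `R > 0`, and
`L_Y(R) ≤ E[X²]` for every `R ≥ 0`. -/
theorem stmt16 {Ω : Type*} [MeasureSpace Ω] [IsProbabilityMeasure (ℙ : Measure Ω)]
    (n : ℕ) (X : Fin n → Ω → ℝ) (X0 : Ω → ℝ)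
    (hXm : ∀ i, Measurable (X i)) (hX0m : Measurable X0)
    (hindep : iIndepFun X ℙ)
    (hid : ∀ i, Measure.map (X i) ℙ = Measure.map X0 ℙ)
    (hmean : ∫ ω, X0 ω = 0)
    (h4 : Integrable (fun ω => (X0 ω) ^ 4))
    (lam : Fin n → ℝ) (hlam : ∀ i, lam i ∈ Set.Ioo (0 : ℝ) 1)
    (hsum : ∑ i, (lam i) ^ 2 = 1) :
    (∀ R : ℝ, 0 ≤ R →
      (∫ ω in {ω | R ≤ |∑ i, lam i * X i ω|}, (∑ i, lam i * X i ω) ^ 2) ≤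
        ∫ ω, (X0 ω) ^ 2) ∧
    (∀ R : ℝ, 0 < R →
      (∫ ω in {ω | R ≤ |∑ i, lam i * X i ω|}, (∑ i, lam i * X i ω) ^ 2) ≤
        min (Real.sqrt (((∫ ω, (X0 ω) ^ 4) + 3 * (∫ ω, (X0 ω) ^ 2) ^ 2) *
              (∫ ω, (X0 ω) ^ 2)) / R)
            (∫ ω, (X0 ω) ^ 2)) :=
  stmt16_general n X X0 hXm hX0m hindep hid hmean h4 lam hsum
end

section
/- If ξₙ are i.i.d. copies of ξ with E[ξ] = 0 and E[ξ²] = σ² < ∞, then the sequence {Wₙ²} with Wₙ = (ξ₁+⋯+ξₙ)/√n is uniformly integrable. -/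
open MeasureTheory ProbabilityTheory Real Filter Set

/-!
Truncate each summand at a level `M`: `ξᵢ = uᵢ + vᵢ`, where `uᵢ` is the centred truncation
(bounded by `2M`) and `vᵢ` the centred tail, whose second moment is small uniformly in `i` once `M`
is large. The normalised sums split accordingly as `Wₙ = Uₙ + Vₙ`, and independence gives, uniformly
in `n`, `E[Uₙ⁴] ≤ 3 (2M)⁴` and `E[Vₙ²] ≤ E[(ξ - truncation ξ M)²]`. On the event `{Wₙ² ≥ K}`, whose
probability is at most `σ²/K` by Markov's inequality, `Wₙ² ≤ 2Uₙ² + 2Vₙ²` and `Uₙ² ≤ Uₙ⁴/L + L`;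
choosing `M`, then `L`, then `K` makes the integral small. No central limit theorem is needed.
-/

open Topology Finset
open scoped ENNReal

section Centering

variable {Ω : Type*} [MeasurableSpace Ω] {μ : Measure Ω}

noncomputable def centered (μ : Measure Ω) (f : Ω → ℝ) : Ω → ℝ := fun ω => f ω - ∫ x, f x ∂μ

lemma ProbabilityTheory.iIndepFun.centered_comp {ι : Type*} {X : ι → Ω → ℝ}
    (hX : iIndepFun X μ) {φ : ι → ℝ → ℝ} (hφ : ∀ i, Measurable (φ i)) :
    iIndepFun (fun i => centered μ (φ i ∘ X i)) μ :=
  hX.comp (fun i x => φ i x - ∫ ω, φ i (X i ω) ∂μ) fun i => (hφ i).sub_const _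

variable [IsProbabilityMeasure μ] {f : Ω → ℝ}

lemma MeasureTheory.MemLp.centered {p : ℝ≥0∞} (hf : MemLp f p μ) : MemLp (centered μ f) p μ :=
  hf.sub (memLp_const _)

lemma integral_centered (hf : Integrable f μ) : ∫ ω, centered μ f ω ∂μ = 0 := by
  simp [centered, integral_sub hf (integrable_const _)]

lemma integral_centered_sq_le (hf : AEMeasurable f μ) :
    ∫ ω, centered μ f ω ^ 2 ∂μ ≤ ∫ ω, f ω ^ 2 ∂μ := by
  simp only [centered]
  rw [← variance_eq_integral hf]
  exact variance_le_expectation_sq hf.aestronglyMeasurable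

lemma abs_centered_le {C : ℝ} (hC : ∀ ω, |f ω| ≤ C) (ω : Ω) : |centered μ f ω| ≤ 2 * C := by
  have hint : |∫ x, f x ∂μ| ≤ C := by
    simpa using norm_integral_le_of_norm_le_const (μ := μ) (f := f) (ae_of_all _ hC)
  calc |centered μ f ω| ≤ |f ω| + |∫ x, f x ∂μ| := abs_sub _ _
    _ ≤ 2 * C := by linarith [hC ω]

end Centering

section SumMoments

variable {Ω ι : Type*} [MeasurableSpace Ω] {μ : Measure Ω} [IsProbabilityMeasure μ]
  {X : ι → Ω → ℝ}

lemma integral_sum_sq_eq_sum_integral_sq (hX : iIndepFun X μ) (hL2 : ∀ i, MemLp (X i) 2 μ)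
    (hmean : ∀ i, ∫ ω, X i ω ∂μ = 0) (s : Finset ι) :
    ∫ ω, (∑ i ∈ s, X i ω) ^ 2 ∂μ = ∑ i ∈ s, ∫ ω, X i ω ^ 2 ∂μ := by
  have hvar := IndepFun.variance_sum (s := s) (fun i _ => hL2 i)
    fun i _ j _ hij => hX.indepFun hij
  have hsum : ∑ i ∈ s, X i = fun ω => ∑ i ∈ s, X i ω := by ext; simp
  have hmeas : AEMeasurable (fun ω => ∑ i ∈ s, X i ω) μ :=
    Finset.aemeasurable_fun_sum _ fun i _ => (hL2 i).aestronglyMeasurable.aemeasurable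
  have hsum_mean : ∫ ω, ∑ i ∈ s, X i ω ∂μ = 0 := by
    simp [integral_finsetSum _ fun i _ => (hL2 i).integrable one_le_two, hmean]
  rw [hsum, variance_of_integral_eq_zero hmeas hsum_mean] at hvar
  rw [hvar]
  exact Finset.sum_congr rfl fun i _ =>
    variance_of_integral_eq_zero (hL2 i).aestronglyMeasurable.aemeasurable (hmean i)

lemma integral_sum_pow_four_le (hX : iIndepFun X μ) (hmeas : ∀ i, Measurable (X i)) {B : ℝ}
    (hB : ∀ i ω, |X i ω| ≤ B) (hmean : ∀ i, ∫ ω, X i ω ∂μ = 0) (s : Finset ι) :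
    ∫ ω, (∑ i ∈ s, X i ω) ^ 4 ∂μ ≤ 3 * B ^ 4 * #s ^ 2 := by
  classical
  induction s using Finset.induction_on with
  | empty => simp
  | insert j s hj ih =>
    set S : Ω → ℝ := fun ω => ∑ i ∈ s, X i ω
    have hSmeas : Measurable S := Finset.measurable_fun_sum _ fun i _ => hmeas i
    have hSB : ∀ ω, |S ω| ≤ #s * B := fun ω => by
      simpa using Finset.abs_sum_le_sum_abs (fun i => X i ω) s |>.trans
        (Finset.sum_le_sum fun i _ => hB i ω)
    have hindep : IndepFun S (X j) μ := by
      simpa [S, Finset.sum_fn] using hX.indepFun_finsetSum_of_notMem hmeas hj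
    have hint : ∀ a b : ℕ, Integrable (fun ω => S ω ^ a * X j ω ^ b) μ := fun a b =>
      Integrable.of_bound ((hSmeas.pow_const a).mul ((hmeas j).pow_const b)).aestronglyMeasurable
        ((#s * B) ^ a * B ^ b) (ae_of_all _ fun ω => by
          rw [Real.norm_eq_abs, abs_mul, abs_pow, abs_pow]
          exact mul_le_mul (pow_le_pow_left₀ (abs_nonneg _) (hSB ω) a)
            (pow_le_pow_left₀ (abs_nonneg _) (hB j ω) b) (by positivity)
            (pow_nonneg (mul_nonneg (Nat.cast_nonneg _) ((abs_nonneg _).trans (hB j ω))) a))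
    have hfactor : ∀ a b : ℕ, ∫ ω, S ω ^ a * X j ω ^ b ∂μ
        = (∫ ω, S ω ^ a ∂μ) * ∫ ω, X j ω ^ b ∂μ := fun a b =>
      (hindep.comp (measurable_id.pow_const a)
        (measurable_id.pow_const b)).integral_mul_eq_mul_integral
          (hSmeas.pow_const a).aestronglyMeasurable ((hmeas j).pow_const b).aestronglyMeasurable
    have hint_X : ∀ k : ℕ, Integrable (fun ω => X j ω ^ k) μ := fun k => by
      simpa using hint 0 k
    have hX_le : ∀ k : ℕ, ∫ ω, X j ω ^ k ∂μ ≤ B ^ k := fun k =>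
      (integral_mono (hint_X k) (integrable_const _) fun ω => (le_abs_self _).trans
        (by rw [abs_pow]; exact pow_le_pow_left₀ (abs_nonneg _) (hB j ω) k)).trans (by simp)
    have hL2 : ∀ i, MemLp (X i) 2 μ := fun i =>
      MemLp.of_bound (hmeas i).aestronglyMeasurable B (ae_of_all _ fun ω => hB i ω)
    have hS2 : ∫ ω, S ω ^ 2 ∂μ ≤ #s * B ^ 2 := by
      calc ∫ ω, S ω ^ 2 ∂μ = ∑ i ∈ s, ∫ ω, X i ω ^ 2 ∂μ :=
            integral_sum_sq_eq_sum_integral_sq hX hL2 hmean s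
        _ ≤ ∑ i ∈ s, ∫ _ω, B ^ 2 ∂μ := Finset.sum_le_sum fun i _ =>
          integral_mono (hL2 i).integrable_sq (integrable_const _) fun ω =>
            sq_le_sq' (abs_le.mp (hB i ω)).1 (abs_le.mp (hB i ω)).2
        _ = #s * B ^ 2 := by simp
    have hS1 : ∫ ω, S ω ^ 1 ∂μ = 0 := by
      simp [S, integral_finsetSum _ fun i _ => (hL2 i).integrable one_le_two, hmean]
    have hX1 : ∫ ω, X j ω ^ 1 ∂μ = 0 := by simpa using hmean j
    -- binomial expansion; the terms containing `S ^ 1` or `X j ^ 1` vanish after factoring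
    have hexpand : ∫ ω, (∑ i ∈ insert j s, X i ω) ^ 4 ∂μ
        = ∫ ω, S ω ^ 4 ∂μ + 6 * (∫ ω, S ω ^ 2 ∂μ) * (∫ ω, X j ω ^ 2 ∂μ) + ∫ ω, X j ω ^ 4 ∂μ := by
      simp_rw [Finset.sum_insert hj, add_comm (X j _), add_pow]
      rw [integral_finsetSum _ fun m _ => (hint _ _).mul_const _]
      simp only [integral_mul_const, hfactor, Finset.sum_range_succ, hS1, hX1]
      norm_num [Nat.choose]
      ring
    rw [hexpand, Finset.card_insert_of_notMem hj]
    push_cast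
    have hX2 : 0 ≤ ∫ ω, X j ω ^ 2 ∂μ := integral_nonneg fun ω => sq_nonneg (X j ω)
    nlinarith [hX_le 4, mul_le_mul hS2 (hX_le 2) hX2 (by positivity)]

end SumMoments

section NormalizedSum

variable {Ω : Type*}

noncomputable def normalizedSum (X : ℕ → Ω → ℝ) (n : ℕ) (ω : Ω) : ℝ :=
  (∑ i ∈ Finset.range n, X i ω) / √n

lemma normalizedSum_add (X Y : ℕ → Ω → ℝ) (n : ℕ) (ω : Ω) :
    normalizedSum (fun i => X i + Y i) n ω = normalizedSum X n ω + normalizedSum Y n ω := by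
  simp [normalizedSum, Finset.sum_add_distrib, add_div]

variable [MeasurableSpace Ω] {μ : Measure Ω}

lemma memLp_normalizedSum {p : ℝ≥0∞} {X : ℕ → Ω → ℝ} (hX : ∀ i, MemLp (X i) p μ) (n : ℕ) :
    MemLp (normalizedSum X n) p μ := by
  unfold normalizedSum
  simpa [Finset.sum_fn, div_eq_mul_inv] using
    (memLp_finsetSum' (range n) fun i _ => hX i).mul_const (√n)⁻¹

variable [IsProbabilityMeasure μ] {X : ℕ → Ω → ℝ}

lemma integral_normalizedSum_sq_le (hX : iIndepFun X μ) (hL2 : ∀ i, MemLp (X i) 2 μ)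
    (hmean : ∀ i, ∫ ω, X i ω ∂μ = 0) {s : ℝ} (hs0 : 0 ≤ s) (hs : ∀ i, ∫ ω, X i ω ^ 2 ∂μ ≤ s)
    (n : ℕ) : ∫ ω, normalizedSum X n ω ^ 2 ∂μ ≤ s := by
  simp only [normalizedSum, div_pow, integral_div, sq_sqrt (Nat.cast_nonneg n)]
  rw [integral_sum_sq_eq_sum_integral_sq hX hL2 hmean]
  refine div_le_of_le_mul₀ (Nat.cast_nonneg _) hs0 ?_
  calc ∑ i ∈ range n, ∫ ω, X i ω ^ 2 ∂μ ≤ ∑ _i ∈ range n, s := Finset.sum_le_sum fun i _ => hs i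
    _ = s * n := by simp [mul_comm]

lemma integral_normalizedSum_pow_four_le (hX : iIndepFun X μ) (hmeas : ∀ i, Measurable (X i))
    {B : ℝ} (hB : ∀ i ω, |X i ω| ≤ B) (hmean : ∀ i, ∫ ω, X i ω ∂μ = 0) (n : ℕ) :
    ∫ ω, normalizedSum X n ω ^ 4 ∂μ ≤ 3 * B ^ 4 := by
  have hsqrt : √(n : ℝ) ^ 4 = (n : ℝ) ^ 2 := by
    rw [show 4 = 2 * 2 by rfl, pow_mul, sq_sqrt (Nat.cast_nonneg n)]
  simp only [normalizedSum, div_pow, integral_div, hsqrt]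
  refine div_le_of_le_mul₀ (by positivity) (by positivity) ?_
  simpa using integral_sum_pow_four_le hX hmeas hB hmean (range n)

end NormalizedSum

section SecondMomentBound

variable {Ω : Type*} [MeasurableSpace Ω] {μ : Measure Ω}

lemma integral_sq_le_integral_pow_four_div_add {g : Ω → ℝ} [IsFiniteMeasure μ] (hg : MemLp g 4 μ)
    (s : Set Ω) {L : ℝ} (hL : 0 < L) :
    ∫ ω in s, g ω ^ 2 ∂μ ≤ (∫ ω, g ω ^ 4 ∂μ) / L + L * μ.real s := by
  have hg4 : Integrable (fun ω => g ω ^ 4) μ := by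
    simpa [Even.pow_abs (by decide : Even 4)] using hg.integrable_norm_pow' (p := 4)
  have hg2 : Integrable (fun ω => g ω ^ 2) μ := (hg.mono_exponent (by norm_num)).integrable_sq
  calc ∫ ω in s, g ω ^ 2 ∂μ ≤ ∫ ω in s, (g ω ^ 4 / L + L) ∂μ :=
        setIntegral_mono hg2.integrableOn ((hg4.div_const L).add (integrable_const L)).integrableOn
          fun ω => by
            rw [div_add' _ _ _ hL.ne', le_div_iff₀ hL]
            nlinarith [sq_nonneg (g ω ^ 2 - L)]
    _ = (∫ ω in s, g ω ^ 4 ∂μ) / L + L * μ.real s := by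
        rw [integral_add (hg4.div_const L).integrableOn (integrable_const L).integrableOn,
          integral_div, setIntegral_const, smul_eq_mul, mul_comm]
    _ ≤ (∫ ω, g ω ^ 4 ∂μ) / L + L * μ.real s := by
        have := setIntegral_le_integral (s := s) hg4 (ae_of_all _ fun ω => by positivity)
        gcongr

lemma setIntegral_sq_le_of_eq_add [IsFiniteMeasure μ] {f g h : Ω → ℝ}
    (hfgh : ∀ ω, f ω = g ω + h ω) (hf : MemLp f 2 μ) (hg : MemLp g 4 μ) (hh : MemLp h 2 μ)
    {K L : ℝ} (hK : 0 < K) (hL : 0 < L) :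
    ∫ ω in {ω | K ≤ f ω ^ 2}, f ω ^ 2 ∂μ
      ≤ 2 * ((∫ ω, g ω ^ 4 ∂μ) / L + L * ((∫ ω, f ω ^ 2 ∂μ) / K)) + 2 * ∫ ω, h ω ^ 2 ∂μ := by
  set A := {ω | K ≤ f ω ^ 2}
  have hg2 : Integrable (fun ω => g ω ^ 2) μ := (hg.mono_exponent (by norm_num)).integrable_sq
  have hmarkov : μ.real A ≤ (∫ ω, f ω ^ 2 ∂μ) / K := by
    rw [le_div_iff₀ hK, mul_comm]
    exact mul_meas_ge_le_integral_of_nonneg (ae_of_all _ fun ω => sq_nonneg _) hf.integrable_sq K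
  calc ∫ ω in A, f ω ^ 2 ∂μ ≤ ∫ ω in A, (2 * g ω ^ 2 + 2 * h ω ^ 2) ∂μ :=
        setIntegral_mono hf.integrable_sq.integrableOn
          ((hg2.const_mul 2).add (hh.integrable_sq.const_mul 2)).integrableOn fun ω => by
            simp only [hfgh ω]
            nlinarith [sq_nonneg (g ω - h ω)]
    _ = 2 * ∫ ω in A, g ω ^ 2 ∂μ + 2 * ∫ ω in A, h ω ^ 2 ∂μ := by
        rw [integral_add (hg2.const_mul 2).integrableOn (hh.integrable_sq.const_mul 2).integrableOn,
          integral_const_mul, integral_const_mul]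
    _ ≤ 2 * ((∫ ω, g ω ^ 4 ∂μ) / L + L * μ.real A) + 2 * ∫ ω, h ω ^ 2 ∂μ := by
        have := integral_sq_le_integral_pow_four_div_add hg A hL
        have := setIntegral_le_integral (s := A) hh.integrable_sq (ae_of_all _ fun ω => sq_nonneg _)
        gcongr
    _ ≤ _ := by gcongr

end SecondMomentBound

section Truncation

variable {Ω : Type*} [MeasurableSpace Ω] {μ : Measure Ω}

lemma measurable_truncation_id (A : ℝ) : Measurable (truncation id A) :=
  (measurable_id.indicator measurableSet_Ioc).comp measurable_id

lemma tendsto_integral_sub_truncation_sq {f : Ω → ℝ} (hf : MemLp f 2 μ) :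
    Tendsto (fun A => ∫ ω, (f ω - truncation f A ω) ^ 2 ∂μ) atTop (𝓝 0) := by
  have hdom : ∀ A ω, ‖(f ω - truncation f A ω) ^ 2‖ ≤ f ω ^ 2 := fun A ω => by
    by_cases h : f ω ∈ Ioc (-A) A <;> simp [truncation, h, sq_nonneg]
  have hlim : ∀ ω, Tendsto (fun A => (f ω - truncation f A ω) ^ 2) atTop (𝓝 0) := fun ω =>
    tendsto_const_nhds.congr' <| (eventually_gt_atTop |f ω|).mono fun A hA => by
      simp [truncation_eq_self hA]
  simpa using tendsto_integral_filter_of_dominated_convergence (fun ω => f ω ^ 2)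
    (Eventually.of_forall fun A => (hf.1.sub hf.1.truncation).pow 2)
    (Eventually.of_forall fun A => ae_of_all _ (hdom A)) hf.integrable_sq (ae_of_all _ hlim)

lemma measurable_centered_truncation {f : Ω → ℝ} (hf : Measurable f) (A : ℝ) :
    Measurable (centered μ (truncation f A)) :=
  ((measurable_truncation_id A).comp hf).sub_const _

variable [IsProbabilityMeasure μ]

lemma centered_truncation_add_centered_sub_truncation {f : Ω → ℝ} (hf : Integrable f μ)
    (hmean : ∫ ω, f ω ∂μ = 0) (A : ℝ) :
    centered μ (truncation f A) + centered μ (f - truncation f A) = f := by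
  have htrunc : Integrable (truncation f A) μ := hf.1.integrable_truncation
  ext ω
  simp [centered, integral_sub hf htrunc, hmean]

variable {X : ℕ → Ω → ℝ}

lemma integral_normalizedSum_centered_truncation_pow_four_le (hX : iIndepFun X μ)
    (hmeas : ∀ i, Measurable (X i)) (M : ℝ) (n : ℕ) :
    ∫ ω, normalizedSum (fun i => centered μ (truncation (X i) M)) n ω ^ 4 ∂μ
      ≤ 3 * (2 * |M|) ^ 4 :=
  integral_normalizedSum_pow_four_le (hX.centered_comp fun _ => measurable_truncation_id M)
    (fun i => measurable_centered_truncation (hmeas i) M)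
    (fun i => abs_centered_le (abs_truncation_le_bound (X i) M))
    (fun i => integral_centered (hmeas i).aestronglyMeasurable.integrable_truncation) n

lemma integral_normalizedSum_centered_sub_truncation_sq_le (hX : iIndepFun X μ)
    (hL2 : ∀ i, MemLp (X i) 2 μ) {M δ : ℝ} (hδ : 0 ≤ δ)
    (htail : ∀ i, ∫ ω, (X i ω - truncation (X i) M ω) ^ 2 ∂μ ≤ δ) (n : ℕ) :
    ∫ ω, normalizedSum (fun i => centered μ (X i - truncation (X i) M)) n ω ^ 2 ∂μ ≤ δ := by
  have htail_L2 : ∀ i, MemLp (X i - truncation (X i) M) 2 μ := fun i =>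
    (hL2 i).sub (hL2 i).1.memLp_truncation
  refine integral_normalizedSum_sq_le
    (hX.centered_comp fun _ => measurable_id.sub (measurable_truncation_id M))
    (fun i => (htail_L2 i).centered)
    (fun i => integral_centered ((htail_L2 i).integrable one_le_two)) hδ
    (fun i => (integral_centered_sq_le (htail_L2 i).1.aemeasurable).trans (htail i)) n

end Truncation

theorem exists_setIntegral_normalizedSum_sq_le {Ω : Type*} [MeasurableSpace Ω] {μ : Measure Ω}
    [IsProbabilityMeasure μ] {X : ℕ → Ω → ℝ} (hX : iIndepFun X μ) (hmeas : ∀ i, Measurable (X i))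
    (hL2 : ∀ i, MemLp (X i) 2 μ) (hmean : ∀ i, ∫ ω, X i ω ∂μ = 0) {s : ℝ}
    (hs : ∀ i, ∫ ω, X i ω ^ 2 ∂μ ≤ s)
    (htail : ∀ δ > 0, ∃ M, ∀ i, ∫ ω, (X i ω - truncation (X i) M ω) ^ 2 ∂μ ≤ δ)
    {ε : ℝ} (hε : 0 < ε) :
    ∃ K, ∀ n, ∫ ω in {ω | K ≤ normalizedSum X n ω ^ 2}, normalizedSum X n ω ^ 2 ∂μ ≤ ε := by
  have hs0 : 0 ≤ s := (integral_nonneg fun ω => sq_nonneg (X 0 ω)).trans (hs 0)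
  obtain ⟨M, hM⟩ := htail (ε / 8) (by positivity)
  set C := 3 * (2 * |M|) ^ 4
  set L := 8 * C / ε + 1 with hL_def
  have hL : 0 < L := by positivity
  have hCL : C / L ≤ ε / 8 := by
    have : ε / 8 * L = C + ε / 8 := by rw [hL_def]; field_simp
    rw [div_le_iff₀ hL]
    linarith
  set K := 8 * L * s / ε + 1 with hK_def
  have hK : 0 < K := by positivity
  have hLK : L * (s / K) ≤ ε / 8 := by
    have : ε / 8 * K = L * s + ε / 8 := by rw [hK_def]; field_simp
    rw [← mul_div_assoc, div_le_iff₀ hK]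
    linarith
  refine ⟨K, fun n => ?_⟩
  have hdecomp : ∀ ω, normalizedSum X n ω
      = normalizedSum (fun i => centered μ (truncation (X i) M)) n ω
        + normalizedSum (fun i => centered μ (X i - truncation (X i) M)) n ω := fun ω => by
    rw [← normalizedSum_add]
    simp only [centered_truncation_add_centered_sub_truncation
      ((hL2 _).integrable one_le_two) (hmean _)]
  calc _ ≤ _ := setIntegral_sq_le_of_eq_add hdecomp (memLp_normalizedSum hL2 n)
        (memLp_normalizedSum (fun i => MemLp.of_bound
          (measurable_centered_truncation (hmeas i) M).aestronglyMeasurable (2 * |M|)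
          (ae_of_all _ (abs_centered_le (abs_truncation_le_bound (X i) M)))) n)
        (memLp_normalizedSum (fun i => ((hL2 i).sub (hL2 i).1.memLp_truncation).centered) n) hK hL
    _ ≤ 2 * (C / L + L * (s / K)) + 2 * (ε / 8) := by
        have := integral_normalizedSum_centered_truncation_pow_four_le hX hmeas M n
        have := integral_normalizedSum_centered_sub_truncation_sq_le hX hL2 (by positivity) hM n
        have := integral_normalizedSum_sq_le hX hL2 hmean hs0 hs n
        gcongr
    _ ≤ ε := by linarith

/-- for i.i.d. mean-zero `ξᵢ` with `E[ξ²] = σ² < ∞`, the sequence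
`Wₙ² = ((ξ₁ + ⋯ + ξₙ)/√n)²` is uniformly integrable. -/
theorem stmt17 {Ω : Type*} [MeasureSpace Ω] [IsProbabilityMeasure (ℙ : Measure Ω)]
    (ξ : ℕ → Ω → ℝ) (ξ0 : Ω → ℝ)
    (hξm : ∀ i, Measurable (ξ i)) (hξ0m : Measurable ξ0)
    (hindep : iIndepFun ξ ℙ)
    (hid : ∀ i, Measure.map (ξ i) ℙ = Measure.map ξ0 ℙ)
    (hmean : ∫ ω, ξ0 ω = 0)
    (hL2 : Integrable (fun ω => (ξ0 ω) ^ 2))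
    (σ : ℝ) (hσ : ∫ ω, (ξ0 ω) ^ 2 = σ ^ 2) :
    ∀ ε : ℝ, 0 < ε → ∃ K : ℝ, ∀ n : ℕ, 1 ≤ n →
      (∫ ω in {ω | K ≤ ((∑ i ∈ Finset.range n, ξ i ω) / Real.sqrt n) ^ 2},
          ((∑ i ∈ Finset.range n, ξ i ω) / Real.sqrt n) ^ 2) ≤ ε := by
  intro ε hε
  have hident : ∀ i, IdentDistrib (ξ i) ξ0 ℙ ℙ := fun i =>
    ⟨(hξm i).aemeasurable, hξ0m.aemeasurable, hid i⟩
  have hξ0L2 : MemLp ξ0 2 ℙ := (memLp_two_iff_integrable_sq hξ0m.aestronglyMeasurable).2 hL2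
  have htail : ∀ δ > 0, ∃ M, ∀ i, ∫ ω, (ξ i ω - truncation (ξ i) M ω) ^ 2 ≤ δ := fun δ hδ => by
    obtain ⟨M, hM⟩ :=
      ((tendsto_integral_sub_truncation_sq hξ0L2).eventually (ge_mem_nhds hδ)).exists
    exact ⟨M, fun i => ((hident i).comp
      ((measurable_id.sub (measurable_truncation_id M)).pow_const 2)).integral_eq.trans_le hM⟩
  obtain ⟨K, hK⟩ := exists_setIntegral_normalizedSum_sq_le hindep hξm
    (fun i => (hident i).memLp_iff.2 hξ0L2) (fun i => (hident i).integral_eq.trans hmean)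
    (fun i => (((hident i).comp (measurable_id.pow_const 2)).integral_eq.trans hσ).le) htail hε
  exact ⟨K, fun n _ => hK n⟩
end

section
/- Let X = X₀ + G_a with E[X₀]=0, G_a ∼ N(0,a) independent of X₀, 0 < a < 1, and tail variance L_X ≤ l for a decreasing l with l(R)→0. Then the tail variance of X₀ satisfies L_{X₀}(2R)·(1 − a²/R²) ≤ l(R) for all R > a, i.e., the tail variance of X₀ is uniformly controlled by that of X. -/
open MeasureTheory ProbabilityTheory Real Filter Set
open scoped NNReal ENNReal

/-! On `{|X₀| ≥ 2R}` one has `X₀² + 2 X₀ G ≤ X² 1_{|X| ≥ R}` pointwise: where `|X| < R` the triangle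
inequality forces `|G| > R > |X|`, so `X₀² + 2 X₀ G = X² - G² < 0`. The cross term `X₀ G` integrates
to zero over `{|X₀| ≥ 2R}` by independence and `E G = 0`, whence `L_{X₀}(2R) ≤ L_X(R) ≤ l(R)`. -/

lemma sq_add_two_mul_le_indicator_sq {R x y : ℝ} (hx : 2 * R ≤ |x|) :
    x ^ 2 + 2 * x * y ≤ {z : ℝ | R ≤ |z|}.indicator (· ^ 2) (x + y) := by
  by_cases hxy : R ≤ |x + y|
  · rw [indicator_of_mem (show x + y ∈ {z : ℝ | R ≤ |z|} from hxy)]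
    nlinarith [sq_nonneg y]
  · rw [indicator_of_notMem (show x + y ∉ {z : ℝ | R ≤ |z|} from hxy)]
    have hxy : |x + y| < R := not_le.mp hxy
    have hy : |x| - |x + y| ≤ |y| := by
      simpa using abs_sub_abs_le_abs_sub x (x + y)
    nlinarith [sq_abs (x + y), sq_abs y, abs_nonneg (x + y)]

section

variable {Ω : Type*} {mΩ : MeasurableSpace Ω} {μ : Measure Ω}

lemma memLp_two_of_integrableOn_sq [IsFiniteMeasure μ] {X : Ω → ℝ} (hX : Measurable X)
    (c : ℝ) (h : IntegrableOn (fun ω ↦ X ω ^ 2) {ω | c ≤ |X ω|} μ) : MemLp X 2 μ := by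
  have hc : MeasurableSet {ω | c ≤ |X ω|} := measurableSet_le measurable_const hX.abs
  have hbdd : IntegrableOn (fun ω ↦ X ω ^ 2) {ω | c ≤ |X ω|}ᶜ μ := by
    refine Measure.integrableOn_of_bounded (measure_ne_top _ _)
      (hX.pow_const 2).aestronglyMeasurable (M := c ^ 2) (ae_restrict_of_forall_mem hc.compl ?_)
    intro ω hω
    have hω : |X ω| < c := not_le.mp hω
    rw [norm_pow, Real.norm_eq_abs, sq_abs]
    nlinarith [sq_abs (X ω), abs_nonneg (X ω)]
  rw [memLp_two_iff_integrable_sq hX.aestronglyMeasurable, ← integrableOn_univ,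
    ← union_compl_self {ω | c ≤ |X ω|}]
  exact h.union hbdd

lemma ProbabilityTheory.IndepFun.setIntegral_preimage_mul_eq_zero {X Y : Ω → ℝ}
    (hXY : IndepFun X Y μ) (hX : Measurable X) (hY : AEMeasurable Y μ) {S : Set ℝ}
    (hS : MeasurableSet S) (hY0 : ∫ ω, Y ω ∂μ = 0) : ∫ ω in X ⁻¹' S, X ω * Y ω ∂μ = 0 := by
  rw [← integral_indicator (hX hS)]
  calc ∫ ω, (X ⁻¹' S).indicator (fun ω ↦ X ω * Y ω) ω ∂μ
      = ∫ ω, S.indicator id (X ω) * id (Y ω) ∂μ := by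
        congr with ω
        by_cases h : X ω ∈ S <;> simp [indicator, h]
    _ = 0 := by
      rw [hXY.integral_fun_comp_mul_comp hX.aemeasurable hY
        (measurable_id.indicator hS).aestronglyMeasurable aestronglyMeasurable_id]
      simp [hY0]

theorem setIntegral_sq_le_setIntegral_sq_add [IsFiniteMeasure μ] {X Y : Ω → ℝ}
    (hX : Measurable X) (hY : Measurable Y) (hXY : IndepFun X Y μ) (hY2 : MemLp Y 2 μ)
    (hY0 : ∫ ω, Y ω ∂μ = 0) (R : ℝ) :
    ∫ ω in {ω | 2 * R ≤ |X ω|}, X ω ^ 2 ∂μ ≤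
      ∫ ω in {ω | R ≤ |X ω + Y ω|}, (X ω + Y ω) ^ 2 ∂μ := by
  set S : Set ℝ := {x | 2 * R ≤ |x|}
  set T : Set ℝ := {z | R ≤ |z|}
  have hS : MeasurableSet S := measurableSet_le measurable_const measurable_abs
  have hT : MeasurableSet T := measurableSet_le measurable_const measurable_abs
  change ∫ ω in X ⁻¹' S, X ω ^ 2 ∂μ ≤ _
  by_cases hint : IntegrableOn (fun ω ↦ X ω ^ 2) (X ⁻¹' S) μ
  swap
  · rw [integral_undef hint]
    exact integral_nonneg fun ω ↦ sq_nonneg _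
  have hX2 : MemLp X 2 μ := memLp_two_of_integrableOn_sq hX (2 * R) hint
  set D : Set Ω := {ω | R ≤ |X ω + Y ω|}
  have hD : MeasurableSet D := (hX.add hY) hT
  have hXY1 : Integrable (fun ω ↦ 2 * (X ω * Y ω)) μ := (hX2.integrable_mul hY2).const_mul 2
  have hsq : Integrable (fun ω ↦ (X ω + Y ω) ^ 2) μ := (hX2.add hY2).integrable_sq
  have hind : (fun ω ↦ T.indicator (· ^ 2) (X ω + Y ω)) =
      D.indicator (fun ω ↦ (X ω + Y ω) ^ 2) := by
    ext ω
    by_cases h : R ≤ |X ω + Y ω| <;> simp [T, D, h]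
  calc ∫ ω in X ⁻¹' S, X ω ^ 2 ∂μ
      = ∫ ω in X ⁻¹' S, (X ω ^ 2 + 2 * (X ω * Y ω)) ∂μ := by
        rw [integral_add hint hXY1.integrableOn, integral_const_mul,
          hXY.setIntegral_preimage_mul_eq_zero hX hY.aemeasurable hS hY0, mul_zero, add_zero]
    _ ≤ ∫ ω in X ⁻¹' S, T.indicator (· ^ 2) (X ω + Y ω) ∂μ := by
        refine setIntegral_mono_on ?_ ?_ (hX hS) fun ω hω ↦ ?_
        · exact hint.add hXY1.integrableOn
        · rw [hind]; exact (hsq.indicator hD).integrableOn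
        · simpa [mul_assoc] using sq_add_two_mul_le_indicator_sq hω
    _ ≤ ∫ ω, D.indicator (fun ω ↦ (X ω + Y ω) ^ 2) ω ∂μ := by
        rw [hind]
        exact setIntegral_le_integral (hsq.indicator hD)
          (ae_of_all _ fun ω ↦ indicator_nonneg (fun _ _ ↦ sq_nonneg _) ω)
    _ = ∫ ω in D, (X ω + Y ω) ^ 2 ∂μ := integral_indicator hD

end

theorem stmt19_general {Ω : Type*} [MeasureSpace Ω] [IsProbabilityMeasure (ℙ : Measure Ω)]
    (X0 G : Ω → ℝ) (hX0 : Measurable X0) (hG : Measurable G)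
    (a : ℝ≥0)
    (hindep : IndepFun X0 G ℙ)
    (hGlaw : Measure.map G ℙ = gaussianReal 0 a)
    (l : ℝ → ℝ)
    (htail : ∀ R : ℝ,
      (∫ ω in {ω | R ≤ |X0 ω + G ω|}, (X0 ω + G ω) ^ 2) ≤ l R) :
    ∀ R : ℝ, (a : ℝ) < R →
      (∫ ω in {ω | 2 * R ≤ |X0 ω|}, (X0 ω) ^ 2) * (1 - (a : ℝ) ^ 2 / R ^ 2) ≤ l R := by
  have hG2 : MemLp G 2 ℙ :=
    (memLp_map_measure_iff aestronglyMeasurable_id hG.aemeasurable).1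
      (by rw [hGlaw]; exact_mod_cast memLp_id_gaussianReal 2)
  have hG_hasLaw : HasLaw G (gaussianReal 0 a) := ⟨hG.aemeasurable, hGlaw⟩
  have hG0 : ∫ ω, G ω = 0 := by rw [hG_hasLaw.integral_eq, integral_id_gaussianReal]
  intro R _
  calc (∫ ω in {ω | 2 * R ≤ |X0 ω|}, (X0 ω) ^ 2) * (1 - (a : ℝ) ^ 2 / R ^ 2)
      ≤ ∫ ω in {ω | 2 * R ≤ |X0 ω|}, (X0 ω) ^ 2 :=
        mul_le_of_le_one_right (integral_nonneg fun ω ↦ sq_nonneg _)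
          (sub_le_self _ (by positivity))
    _ ≤ ∫ ω in {ω | R ≤ |X0 ω + G ω|}, (X0 ω + G ω) ^ 2 :=
        setIntegral_sq_le_setIntegral_sq_add hX0 hG hindep hG2 hG0 R
    _ ≤ l R := htail R

/-- if `X = X₀ + G_a` with `E[X₀] = 0`, `G_a ∼ N(0,a)` independent of `X₀`,
`0 < a < 1`, and the tail variance of `X` is bounded by a decreasing function `l` tending
to `0`, then the tail variance of `X₀` satisfies
`L_{X₀}(2R) (1 − a²/R²) ≤ l(R)` for all `R > a`. -/
theorem stmt19 {Ω : Type*} [MeasureSpace Ω] [IsProbabilityMeasure (ℙ : Measure Ω)]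
    (X0 G : Ω → ℝ) (hX0 : Measurable X0) (hG : Measurable G)
    (a : ℝ≥0) (ha : 0 < (a : ℝ)) (ha1 : (a : ℝ) < 1)
    (hindep : IndepFun X0 G ℙ)
    (hGlaw : Measure.map G ℙ = gaussianReal 0 a)
    (hmean : ∫ ω, X0 ω = 0)
    (l : ℝ → ℝ) (hmono : Antitone l) (hl0 : Tendsto l atTop (nhds 0))
    (htail : ∀ R : ℝ,
      (∫ ω in {ω | R ≤ |X0 ω + G ω|}, (X0 ω + G ω) ^ 2) ≤ l R) :
    ∀ R : ℝ, (a : ℝ) < R →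
      (∫ ω in {ω | 2 * R ≤ |X0 ω|}, (X0 ω) ^ 2) * (1 - (a : ℝ) ^ 2 / R ^ 2) ≤ l R :=
  stmt19_general X0 G hX0 hG a hindep hGlaw l htail
end
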